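/- For rational numbers b and c, the product (b²c⁴ - 6b²c³ + 13b²c² - 12b²c + 4b² + c²)·(bc - 1 - b)·(bc - c - 2b) equals zero if and only if (b,c) = (0,0), or (c ≠ 1 and b = 1/(c-1)), or (c ≠ 2 and b = c/(c-2)). -/

import Mathlib

section Factors

variable {K : Type*} [Field K]

theorem quartic_eq_sq_add_sq (b c : K) :
    b^2*c^4 - 6*b^2*c^3 + 13*b^2*c^2 - 12*b^2*c + 4*b^2 + c^2 =
      (b * (c - 1) * (c - 2))^2 + c^2 := by
  ring

theorem quartic_eq_zero_iff [LinearOrder K] [IsStrictOrderedRing K] (b c : K) :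
    b^2*c^4 - 6*b^2*c^3 + 13*b^2*c^2 - 12*b^2*c + 4*b^2 + c^2 = 0 ↔ b = 0 ∧ c = 0 := by
  rw [quartic_eq_sq_add_sq]
  constructor
  · intro h
    obtain ⟨hb, hc⟩ := (add_eq_zero_iff_of_nonneg (sq_nonneg _) (sq_nonneg _)).mp h
    obtain rfl : c = 0 := pow_eq_zero_iff two_ne_zero |>.mp hc
    refine ⟨?_, rfl⟩
    simpa using hb
  · rintro ⟨rfl, rfl⟩
    ring

theorem mul_sub_one_sub_eq_zero_iff (b c : K) :
    b*c - 1 - b = 0 ↔ c ≠ 1 ∧ b = 1/(c - 1) := by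
  constructor
  · intro h
    have hc : c ≠ 1 := by
      rintro rfl
      simp at h
    refine ⟨hc, ?_⟩
    rw [eq_div_iff (sub_ne_zero.mpr hc)]
    linear_combination h
  · rintro ⟨hc, rfl⟩
    field_simp [sub_ne_zero.mpr hc]
    ring

theorem mul_sub_sub_two_mul_eq_zero_iff [NeZero (2 : K)] (b c : K) :
    b*c - c - 2*b = 0 ↔ c ≠ 2 ∧ b = c/(c - 2) := by
  constructor
  · intro h
    have hc : c ≠ 2 := by
      rintro rfl
      exact two_ne_zero (α := K) (by linear_combination -h)
    refine ⟨hc, ?_⟩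
    rw [eq_div_iff (sub_ne_zero.mpr hc)]
    linear_combination h
  · rintro ⟨hc, rfl⟩
    field_simp [sub_ne_zero.mpr hc]
    ring

end Factors

theorem stmt_14 (b c : ℚ) :
    (b^2*c^4 - 6*b^2*c^3 + 13*b^2*c^2 - 12*b^2*c + 4*b^2 + c^2) * (b*c - 1 - b) *
      (b*c - c - 2*b) = 0 ↔
    (b = 0 ∧ c = 0) ∨ (c ≠ 1 ∧ b = 1/(c - 1)) ∨ (c ≠ 2 ∧ b = c/(c - 2)) := by
  rw [mul_eq_zero, mul_eq_zero, quartic_eq_zero_iff, mul_sub_one_sub_eq_zero_iff,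
    mul_sub_sub_two_mul_eq_zero_iff, or_assoc]
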